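/- arXiv:1604.01084 — 4 statements merged into one kernel-verified Lean document; each statement's English description precedes it below -/
import Mathlib

section
/- Let f : ℝⁿ → ℝⁿ be locally Lipschitz, R : ℝⁿ → ℝ be C¹, γ > 0, and suppose the sublevel set E = {x | R(x) ≤ γ} is compact. If ⟨∇R(x), f(x)⟩ < 0 for every x with R(x) = γ, then E is positively invariant: every solution x(t) of ẋ = f(x) with x(0) ∈ E satisfies x(t) ∈ E for all t ≥ 0. -/
open RealInnerProductSpace

/-- Positive invariance of a compact sublevel set under the boundary
decrease condition. -/
theorem stmt_0 (n : ℕ) (f : EuclideanSpace ℝ (Fin n) → EuclideanSpace ℝ (Fin n))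
    (hf : LocallyLipschitz f)
    (R : EuclideanSpace ℝ (Fin n) → ℝ) (hR : ContDiff ℝ 1 R)
    (γ : ℝ) (hγ : 0 < γ)
    (hcomp : IsCompact {x | R x ≤ γ})
    (hbd : ∀ x, R x = γ → ⟪gradient R x, f x⟫ < 0)
    (x : ℝ → EuclideanSpace ℝ (Fin n))
    (hx : ∀ t, 0 ≤ t → HasDerivAt x (f (x t)) t)
    (hx0 : R (x 0) ≤ γ) :
    ∀ t, 0 ≤ t → R (x t) ≤ γ := by
  intro t ht
  by_contra hgt
  push_neg at hgt
  set g : ℝ → ℝ := fun s => R (x s) with hgdef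
  have hderiv : ∀ s, 0 ≤ s → HasDerivAt g ⟪gradient R (x s), f (x s)⟫ s := by
    intro s hs
    have h1 : HasGradientAt R (gradient R (x s)) (x s) :=
      (hR.differentiable one_ne_zero (x s)).hasGradientAt
    have h2 := h1.hasFDerivAt.comp_hasDerivAt s (hx s hs)
    simpa [hgdef, Function.comp_def] using h2
  -- the set S
  set S : Set ℝ := {s ∈ Set.Icc 0 t | g s ≤ γ} with hSdef
  have hScont : ContinuousOn g (Set.Icc 0 t) := fun s hs =>
    (hderiv s hs.1).continuousAt.continuousWithinAt
  have hSclosed : IsClosed S := by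
    have := hScont.preimage_isClosed_of_isClosed isClosed_Icc (isClosed_Iic (a := γ))
    exact this
  have hS0 : (0 : ℝ) ∈ S := ⟨⟨le_refl 0, ht⟩, hx0⟩
  have hSbdd : BddAbove S := ⟨t, fun s hs => hs.1.2⟩
  set t₁ : ℝ := sSup S with ht₁def
  have ht₁mem : t₁ ∈ S := hSclosed.csSup_mem ⟨0, hS0⟩ hSbdd
  have ht₁0 : 0 ≤ t₁ := ht₁mem.1.1
  have ht₁le : t₁ ≤ t := ht₁mem.1.2
  have ht₁lt : t₁ < t := lt_of_le_of_ne ht₁le (by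
    intro h; exact absurd ht₁mem.2 (by rw [h]; exact not_le.mpr hgt))
  have hgt' : ∀ s ∈ Set.Ioc t₁ t, γ < g s := by
    intro s hs
    by_contra hle
    push_neg at hle
    have : s ∈ S := ⟨⟨le_trans ht₁0 hs.1.le, hs.2⟩, hle⟩
    exact absurd (le_csSup hSbdd this) (not_le.mpr hs.1)
  have hIoc : Set.Ioc t₁ t ∈ nhdsWithin t₁ (Set.Ioi t₁) :=
    Ioc_mem_nhdsGT_of_mem ⟨le_refl _, ht₁lt⟩
  have hgeq : g t₁ = γ := by
    refine le_antisymm ht₁mem.2 ?_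
    have htend : Filter.Tendsto g (nhdsWithin t₁ (Set.Ioi t₁)) (nhds (g t₁)) :=
      (hderiv t₁ ht₁0).continuousAt.continuousWithinAt.tendsto
    refine ge_of_tendsto htend ?_
    filter_upwards [hIoc] with s hs
    exact (hgt' s hs).le
  have hc : ⟪gradient R (x t₁), f (x t₁)⟫ < 0 := hbd (x t₁) hgeq
  have hslope : Filter.Tendsto (slope g t₁) (nhdsWithin t₁ (Set.Ioi t₁))
      (nhds ⟪gradient R (x t₁), f (x t₁)⟫) :=
    ((hasDerivAt_iff_tendsto_slope.mp (hderiv t₁ ht₁0)).mono_left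
      (nhdsWithin_mono _ fun s hs => ne_of_gt hs))
  have hnonneg : 0 ≤ ⟪gradient R (x t₁), f (x t₁)⟫ := by
    refine ge_of_tendsto hslope ?_
    filter_upwards [hIoc] with s hs
    have h1 : 0 < s - t₁ := sub_pos.mpr hs.1
    have h2 : 0 < g s - g t₁ := by rw [hgeq]; exact sub_pos.mpr (hgt' s hs)
    have : 0 < (g s - g t₁) / (s - t₁) := div_pos h2 h1
    simpa [slope_def_field, div_eq_iff, ne_of_gt h1] using this.le
  exact absurd hc (not_lt.mpr hnonneg)
end

section
/- Let V_N, R : ℝⁿ → ℝ be C¹, γ > 0, V_N(0) = 0, R(0) < γ, and suppose V_N(x) > 0 for all x ≠ 0 with R(x) ≤ γ, and ⟨∇V_N(x)(γ - R(x)) + V_N(x)∇R(x), f(x)⟩ < 0 for all x ≠ 0 with R(x) ≤ γ. Then V(x) = V_N(x)/(γ - R(x)) satisfies V(0) = 0, V(x) > 0 for all x ≠ 0 in {R < γ}, and ⟨∇V(x), f(x)⟩ < 0 for all x ≠ 0 in {R < γ}. -/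
open RealInnerProductSpace

/-- The rational function `V = V_N / (γ - R)` is a Lyapunov function on the
open sublevel set `{R < γ}`. -/
theorem stmt_5 (n : ℕ)
    (f : EuclideanSpace ℝ (Fin n) → EuclideanSpace ℝ (Fin n))
    (hf : Continuous f) (hf0 : f 0 = 0)
    (VN R : EuclideanSpace ℝ (Fin n) → ℝ)
    (hVN : ContDiff ℝ 1 VN) (hR : ContDiff ℝ 1 R)
    (γ : ℝ) (hγ : 0 < γ)
    (hVN0 : VN 0 = 0) (hR0 : R 0 < γ)
    (hpos : ∀ x, x ≠ 0 → R x ≤ γ → 0 < VN x)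
    (hdec : ∀ x, x ≠ 0 → R x ≤ γ →
      ⟪(γ - R x) • gradient VN x + VN x • gradient R x, f x⟫ < 0) :
    (VN 0 / (γ - R 0) = 0) ∧
    (∀ x, x ≠ 0 → R x < γ → 0 < VN x / (γ - R x)) ∧
    (∀ x, x ≠ 0 → R x < γ →
      ⟪gradient (fun y => VN y / (γ - R y)) x, f x⟫ < 0) := by
  refine ⟨by rw [hVN0, zero_div], fun x hx hRx => div_pos (hpos x hx hRx.le) (by linarith), ?_⟩
  intro x hx hRx
  set c : ℝ := γ - R x with hc
  have hcpos : 0 < c := by simp only [hc]; linarith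
  have hcne : c ≠ 0 := hcpos.ne'
  have hdVN : HasFDerivAt VN (fderiv ℝ VN x) x :=
    (hVN.differentiable one_ne_zero x).hasFDerivAt
  have hdR : HasFDerivAt R (fderiv ℝ R x) x :=
    (hR.differentiable one_ne_zero x).hasFDerivAt
  have hden : HasFDerivAt (fun y => γ - R y) ((0 : _ →L[ℝ] ℝ) - fderiv ℝ R x) x :=
    (hasFDerivAt_const γ x).sub hdR
  have hinv : HasFDerivAt (fun y => (γ - R y)⁻¹)
      ((-(c ^ 2)⁻¹) • ((0 : _ →L[ℝ] ℝ) - fderiv ℝ R x)) x := by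
    have := (hasDerivAt_inv hcne).comp_hasFDerivAt x hden
    exact this
  have hmul : HasFDerivAt (fun y => VN y / (γ - R y))
      (VN x • ((-(c ^ 2)⁻¹) • ((0 : _ →L[ℝ] ℝ) - fderiv ℝ R x)) + c⁻¹ • fderiv ℝ VN x) x := by
    have := hdVN.mul hinv
    simp only [div_eq_mul_inv]
    exact this
  have hgrad : gradient (fun y => VN y / (γ - R y)) x =
      (InnerProductSpace.toDual ℝ _).symm
        (VN x • ((-(c ^ 2)⁻¹) • ((0 : _ →L[ℝ] ℝ) - fderiv ℝ R x)) + c⁻¹ • fderiv ℝ VN x) :=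
    ((hasFDerivAt_iff_hasGradientAt).mp hmul).gradient
  have hinner : ∀ (L : EuclideanSpace ℝ (Fin n) →L[ℝ] ℝ) (y : EuclideanSpace ℝ (Fin n)),
      ⟪(InnerProductSpace.toDual ℝ _).symm L, y⟫ = L y := fun L y => by
    rw [← InnerProductSpace.toDual_apply_apply, LinearIsometryEquiv.apply_symm_apply]
  have hgVN : ∀ y, ⟪gradient VN x, y⟫ = fderiv ℝ VN x y := fun y => by
    rw [gradient]; exact hinner _ y
  have hgR : ∀ y, ⟪gradient R x, y⟫ = fderiv ℝ R x y := fun y => by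
    rw [gradient]; exact hinner _ y
  have hkey := hdec x hx hRx.le
  rw [inner_add_left, real_inner_smul_left, real_inner_smul_left, hgVN, hgR] at hkey
  rw [hgrad, hinner]
  simp only [ContinuousLinearMap.add_apply, ContinuousLinearMap.smul_apply,
    ContinuousLinearMap.sub_apply, ContinuousLinearMap.zero_apply, smul_eq_mul]
  have hc2 : 0 < c ^ 2 := pow_pos hcpos 2
  rw [show γ - R x = c from rfl] at hkey
  set a := fderiv ℝ VN x (f x)
  set b := fderiv ℝ R x (f x)
  have : VN x * (-(c ^ 2)⁻¹ * (0 - b)) + c⁻¹ * a = (c * a + VN x * b) / c ^ 2 := by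
    field_simp; ring
  rw [this]
  exact div_neg_of_neg_of_pos hkey hc2
end

section
/- Let f : ℝⁿ → ℝⁿ be locally Lipschitz, R₁, …, R_d : ℝⁿ → ℝ be C¹ with pointwise maximum R_M, γ > 0, E = {x | R_M(x) ≤ γ} compact. If ⟨ξ, f(x)⟩ < 0 for every x with R_M(x) = γ and every ξ ∈ co{∇R_ℓ(x) : ℓ ∈ I(x)}, where I(x) = {i | R_i(x) = R_M(x)}, then E is positively invariant for ẋ = f(x). -/
open RealInnerProductSpace

/-- Positive invariance of the compact sublevel set of a pointwise maximum
`R_M` under the Clarke-subdifferential decrease condition on `{R_M = γ}`. -/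
theorem stmt_11 (n d : ℕ) (hd : 0 < d)
    (f : EuclideanSpace ℝ (Fin n) → EuclideanSpace ℝ (Fin n))
    (hf : LocallyLipschitz f)
    (R : Fin d → EuclideanSpace ℝ (Fin n) → ℝ)
    (hR : ∀ i, ContDiff ℝ 1 (R i))
    (RM : EuclideanSpace ℝ (Fin n) → ℝ)
    (hmax₁ : ∀ x i, R i x ≤ RM x)
    (hmax₂ : ∀ x, ∃ i, RM x = R i x)
    (γ : ℝ) (hγ : 0 < γ)
    (hcomp : IsCompact {x | RM x ≤ γ})
    (hbd : ∀ x, RM x = γ →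
      ∀ ξ ∈ convexHull ℝ {v | ∃ i, R i x = RM x ∧ v = gradient (R i) x},
        ⟪ξ, f x⟫ < 0)
    (x : ℝ → EuclideanSpace ℝ (Fin n))
    (hx : ∀ t, 0 ≤ t → HasDerivAt x (f (x t)) t)
    (hx0 : RM (x 0) ≤ γ) :
    ∀ t, 0 ≤ t → RM (x t) ≤ γ := by
  by_contra h
  push_neg at h
  obtain ⟨t₀, ht₀, hgt⟩ := h
  set S : Set ℝ := {t | 0 ≤ t ∧ γ < RM (x t)} with hSdef
  have hSne : S.Nonempty := ⟨t₀, ht₀, hgt⟩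
  have hSbdd : BddBelow S := ⟨0, fun t ht => ht.1⟩
  set T := sInf S with hTdef
  have hT0 : 0 ≤ T := le_csInf hSne fun t ht => ht.1
  have hxc : ContinuousAt x T := (hx T hT0).continuousAt
  -- continuity of t ↦ R i (x t) at T
  have hRc : ∀ i, ContinuousAt (fun t => R i (x t)) T := fun i =>
    ((hR i).continuous.continuousAt).comp hxc
  obtain ⟨i₀, hi₀⟩ := hmax₂ (x T)
  -- continuity of RM ∘ x at T
  have hcg : ContinuousAt (fun t => RM (x t)) T := by
    have hev : ∀ᶠ s in nhds T, |RM (x s) - RM (x T)| ≤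
        Finset.univ.sup' ⟨i₀, Finset.mem_univ _⟩ (fun i => |R i (x s) - R i (x T)|) := by
      filter_upwards with s
      rcases hmax₂ (x s) with ⟨j, hj⟩
      rw [abs_sub_le_iff]
      constructor
      · rw [hj]
        calc R j (x s) - RM (x T) ≤ R j (x s) - R j (x T) := by
              have := hmax₁ (x T) j; linarith
          _ ≤ |R j (x s) - R j (x T)| := le_abs_self _
          _ ≤ _ := Finset.le_sup' (fun i => |R i (x s) - R i (x T)|)
              (Finset.mem_univ j)
      · rw [hi₀]
        calc R i₀ (x T) - RM (x s) ≤ R i₀ (x T) - R i₀ (x s) := by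
              have := hmax₁ (x s) i₀; linarith
          _ ≤ |R i₀ (x s) - R i₀ (x T)| := by rw [abs_sub_comm]; exact le_abs_self _
          _ ≤ _ := Finset.le_sup' (fun i => |R i (x s) - R i (x T)|)
              (Finset.mem_univ i₀)
    have hsup : Filter.Tendsto
        (fun s => Finset.univ.sup' ⟨i₀, Finset.mem_univ _⟩
          (fun i => |R i (x s) - R i (x T)|)) (nhds T) (nhds 0) := by
      have hc : ContinuousAt (fun s => Finset.univ.sup' ⟨i₀, Finset.mem_univ _⟩
          (fun i => |R i (x s) - R i (x T)|)) T :=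
        ContinuousAt.finset_sup'_apply _
          (fun i _ => ((hRc i).sub continuousAt_const).abs)
      have hval : Finset.univ.sup' ⟨i₀, Finset.mem_univ (α := Fin d) _⟩
          (fun i => |R i (x T) - R i (x T)|) = 0 := by simp only [sub_self, abs_zero]; exact Finset.sup'_const _ _
      simpa only [hval] using hc.tendsto
    rw [ContinuousAt, Metric.tendsto_nhds]
    intro ε hε
    have h1 := (Metric.tendsto_nhds.mp hsup) ε hε
    filter_upwards [hev, h1] with s h2 h3
    rw [Real.dist_eq]
    rw [Real.dist_eq, sub_zero] at h3
    exact lt_of_le_of_lt h2 (lt_of_abs_lt h3)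
  -- T is in the closure of S
  have hTcl : T ∈ closure S := (isGLB_csInf hSne hSbdd).mem_closure hSne
  have hSnb : Filter.NeBot (nhdsWithin T S) :=
    mem_closure_iff_nhdsWithin_neBot.mp hTcl
  -- RM (x T) ≥ γ
  have hge : γ ≤ RM (x T) := by
    refine ge_of_tendsto (hcg.tendsto.mono_left (nhdsWithin_le_nhds (s := S))) ?_
    filter_upwards [eventually_mem_nhdsWithin] with s hs
    exact le_of_lt hs.2
  -- RM (x T) ≤ γ
  have hle : RM (x T) ≤ γ := by
    rcases eq_or_lt_of_le hT0 with h0 | hpos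
    · rw [← h0]; exact hx0
    · have hclI : T ∈ closure (Set.Ico 0 T) := by
        rw [closure_Ico (ne_of_lt hpos)]
        exact ⟨hT0, le_rfl⟩
      have hnb : Filter.NeBot (nhdsWithin T (Set.Ico 0 T)) :=
        mem_closure_iff_nhdsWithin_neBot.mp hclI
      refine le_of_tendsto (hcg.tendsto.mono_left (nhdsWithin_le_nhds (s := Set.Ico 0 T))) ?_
      filter_upwards [eventually_mem_nhdsWithin] with s hs
      by_contra hc
      push_neg at hc
      exact absurd (csInf_le hSbdd ⟨hs.1, hc⟩) (not_le.mpr hs.2)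
  have hgT : RM (x T) = γ := le_antisymm hle hge
  -- every trajectory component eventually drops strictly below γ to the right of T
  have key : ∀ i : Fin d, ∀ᶠ s in nhdsWithin T (Set.Ioi T), R i (x s) < γ := by
    intro i
    by_cases hi : R i (x T) = RM (x T)
    · -- active index: use the strict decrease condition
      have hdiff : DifferentiableAt ℝ (R i) (x T) :=
        ((hR i).differentiable one_ne_zero).differentiableAt
      have hgr := hdiff.hasGradientAt
      have hF := hgr.hasFDerivAt
      have hderiv : HasDerivAt (fun s => R i (x s))
          ⟪gradient (R i) (x T), f (x T)⟫ T := by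
        have := hF.comp_hasDerivAt T (hx T hT0)
        rw [InnerProductSpace.toDual_apply_apply] at this
        exact this
      have hneg : ⟪gradient (R i) (x T), f (x T)⟫ < 0 :=
        hbd (x T) hgT _ (subset_convexHull ℝ _ ⟨i, hi, rfl⟩)
      have hslope := hasDerivAt_iff_tendsto_slope.mp hderiv
      have hslope' := hslope.mono_left
        (nhdsWithin_mono T (fun s hs => ne_of_gt hs : Set.Ioi T ⊆ {T}ᶜ))
      have hev : ∀ᶠ s in nhdsWithin T (Set.Ioi T),
          slope (fun s => R i (x s)) T s < 0 :=
        hslope'.eventually (eventually_lt_nhds hneg)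
      filter_upwards [hev, eventually_mem_nhdsWithin] with s hs hs'
      have hsT : 0 < s - T := sub_pos.mpr hs'
      rw [slope_def_field] at hs
      have := (div_neg_iff.mp hs)
      rcases this with ⟨_, h2⟩ | ⟨h1, _⟩
      · linarith
      · have : R i (x s) < R i (x T) := by
          rw [div_lt_iff₀ hsT] at hs; simpa [slope] using by linarith [hs]
        calc R i (x s) < R i (x T) := this
          _ ≤ RM (x T) := hmax₁ _ _
          _ = γ := hgT
    · -- inactive index: continuity
      have hlt : R i (x T) < γ := by
        have h1 := hmax₁ (x T) i
        rw [hgT] at h1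
        exact lt_of_le_of_ne h1 (fun hc => hi (by rw [hc, hgT]))
      have : ∀ᶠ s in nhds T, R i (x s) < γ :=
        (hRc i).eventually_lt continuousAt_const hlt
      exact this.filter_mono nhdsWithin_le_nhds
  have hall : ∀ᶠ s in nhdsWithin T (Set.Ioi T), ∀ i, R i (x s) < γ :=
    Filter.eventually_all.mpr key
  -- S lies strictly to the right of T
  have hSsub : S ⊆ Set.Ioi T := by
    intro s hs
    have hTs : T ≤ s := csInf_le hSbdd hs
    rcases eq_or_lt_of_le hTs with rfl | h
    · exact absurd hs.2 (by rw [hgT]; exact lt_irrefl _)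
    · exact h
  have hmono : nhdsWithin T S ≤ nhdsWithin T (Set.Ioi T) := nhdsWithin_mono T hSsub
  have hfin : ∀ᶠ s in nhdsWithin T S, ∀ i, R i (x s) < γ := hall.filter_mono hmono
  obtain ⟨s, hs1, hs2⟩ := (hfin.and eventually_mem_nhdsWithin).exists
  rcases hmax₂ (x s) with ⟨j, hj⟩
  have : RM (x s) < γ := by rw [hj]; exact hs1 j
  exact absurd hs2.2 (not_lt.mpr (le_of_lt this))
end

section
/- Let f : ℝⁿ → ℝⁿ be locally Lipschitz with f(0) = 0, let R be C¹ with E = {R ≤ γ} compact, 0 ∈ interior of E, and suppose ⟨∇R(x), f(x)⟩ < 0 on {R = γ}. Suppose V_N is C¹ with V_N(0) = 0, V_N > 0 on E \ {0}, and ⟨∇V_N(x), f(x)⟩ < 0 on E \ {0}. Then every solution starting in E converges to 0 as t → ∞; i.e., E is contained in the region of attraction of the origin. -/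
open RealInnerProductSpace

/-- Claim (I) of Theorem 1: the compact positively invariant set
`E = {R ≤ γ}` is contained in the region of attraction of the origin. -/
theorem stmt_19 (n : ℕ)
    (f : EuclideanSpace ℝ (Fin n) → EuclideanSpace ℝ (Fin n))
    (hf : LocallyLipschitz f) (hf0 : f 0 = 0)
    (R : EuclideanSpace ℝ (Fin n) → ℝ) (hR : ContDiff ℝ 1 R)
    (γ : ℝ) (hγ : 0 < γ)
    (hcomp : IsCompact {x | R x ≤ γ})
    (h0int : (0 : EuclideanSpace ℝ (Fin n)) ∈ interior {x | R x ≤ γ})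
    (hbd : ∀ x, R x = γ → ⟪gradient R x, f x⟫ < 0)
    (VN : EuclideanSpace ℝ (Fin n) → ℝ) (hVN : ContDiff ℝ 1 VN)
    (hVN0 : VN 0 = 0)
    (hVNpos : ∀ x, R x ≤ γ → x ≠ 0 → 0 < VN x)
    (hVNdec : ∀ x, R x ≤ γ → x ≠ 0 → ⟪gradient VN x, f x⟫ < 0) :
    ∀ x : ℝ → EuclideanSpace ℝ (Fin n),
      (∀ t, 0 ≤ t → HasDerivAt x (f (x t)) t) → R (x 0) ≤ γ →
        Filter.Tendsto x Filter.atTop (nhds 0) := by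
  intro x hx hx0
  -- chain rule
  have chain : ∀ (W : EuclideanSpace ℝ (Fin n) → ℝ), ContDiff ℝ 1 W → ∀ t, 0 ≤ t →
      HasDerivAt (fun s => W (x s)) ⟪gradient W (x t), f (x t)⟫ t := by
    intro W hW t ht
    have hd : DifferentiableAt ℝ W (x t) := (hW.differentiable one_ne_zero) (x t)
    have hg := hd.hasGradientAt.hasFDerivAt.comp_hasDerivAt t (hx t ht)
    convert hg using 1
    · rfl
    · rfl
    · rfl
    · simp [InnerProductSpace.toDual_apply_apply]
  -- positive invariance of E
  have hinv : ∀ t, 0 ≤ t → R (x t) ≤ γ := by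
    by_contra hcon
    push_neg at hcon
    obtain ⟨t₂, ht₂0, ht₂⟩ := hcon
    set g : ℝ → ℝ := fun s => R (x s) with hgdef
    set S : Set ℝ := {t : ℝ | 0 ≤ t ∧ γ < g t} with hS
    have hSne : S.Nonempty := ⟨t₂, ht₂0, ht₂⟩
    have hSbdd : BddBelow S := ⟨0, fun s hs => hs.1⟩
    set t₁ := sInf S with ht₁def
    have ht₁0 : 0 ≤ t₁ := le_csInf hSne fun s hs => hs.1
    have hgc : ContinuousAt g t₁ :=
      hR.continuous.continuousAt.comp (hx t₁ ht₁0).continuousAt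
    have hclo : t₁ ∈ closure S := csInf_mem_closure hSne hSbdd
    have hneS : (nhdsWithin t₁ S).NeBot := mem_closure_iff_nhdsWithin_neBot.1 hclo
    have hge : γ ≤ g t₁ := by
      refine ge_of_tendsto (hgc.continuousWithinAt :
        Filter.Tendsto g (nhdsWithin t₁ S) _) ?_
      filter_upwards [self_mem_nhdsWithin] with s hs
      exact le_of_lt hs.2
    have hle : g t₁ ≤ γ := by
      rcases eq_or_lt_of_le ht₁0 with h0 | h0
      · rw [← h0]; exact hx0
      · have hne : (nhdsWithin t₁ (Set.Ico 0 t₁)).NeBot := by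
          apply mem_closure_iff_nhdsWithin_neBot.1
          rw [closure_Ico (ne_of_lt h0)]
          exact Set.right_mem_Icc.2 (le_of_lt h0)
        refine le_of_tendsto (hgc.continuousWithinAt :
          Filter.Tendsto g (nhdsWithin t₁ (Set.Ico 0 t₁)) _) ?_
        filter_upwards [self_mem_nhdsWithin] with s hs
        by_contra hlt
        push_neg at hlt
        exact absurd (csInf_le hSbdd ⟨hs.1, hlt⟩) (not_le.2 hs.2)
    have hgt₁ : g t₁ = γ := le_antisymm hle hge
    have ht₁S : t₁ ∉ S := fun h => absurd h.2 (by simp [hgt₁])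
    have hSsub : S ⊆ Set.Ioi t₁ := fun s hs =>
      lt_of_le_of_ne (csInf_le hSbdd hs) (fun h => ht₁S (by rw [ht₁def, h]; exact hs))
    have hder : HasDerivAt g ⟪gradient R (x t₁), f (x t₁)⟫ t₁ := chain R hR t₁ ht₁0
    have hdneg : ⟪gradient R (x t₁), f (x t₁)⟫ < 0 := hbd _ hgt₁
    have hslope := hasDerivAt_iff_tendsto_slope.1 hder
    have hev : ∀ᶠ s in nhdsWithin t₁ {t₁}ᶜ, slope g t₁ s < 0 :=
      hslope.eventually (eventually_lt_nhds hdneg)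
    have hevS : ∀ᶠ s in nhdsWithin t₁ S, slope g t₁ s < 0 :=
      hev.filter_mono (nhdsWithin_mono t₁ (fun s hs => ne_of_gt (hSsub hs)))
    obtain ⟨s, hslt, hsS⟩ := (hevS.and self_mem_nhdsWithin).exists
    have hst : t₁ < s := hSsub hsS
    have hlt0 : g s - g t₁ < 0 := by
      have := mul_neg_of_pos_of_neg (sub_pos.2 hst) hslt
      rw [slope_def_field, mul_comm] at this
      rwa [div_mul_cancel₀ _ (ne_of_gt (sub_pos.2 hst))] at this
    rw [hgt₁] at hlt0
    exact absurd hsS.2 (not_lt.2 (by linarith))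
  -- the Lyapunov function along the trajectory
  set V : ℝ → ℝ := fun t => VN (x t) with hVdef
  have hVderiv : ∀ t, 0 ≤ t → HasDerivAt V ⟪gradient VN (x t), f (x t)⟫ t :=
    fun t ht => chain VN hVN t ht
  have hdle : ∀ t, 0 ≤ t → ⟪gradient VN (x t), f (x t)⟫ ≤ 0 := by
    intro t ht
    by_cases h0 : x t = 0
    · rw [h0, hf0]; simp
    · exact le_of_lt (hVNdec _ (hinv t ht) h0)
  have hVcont : ContinuousOn V (Set.Ici 0) := fun t ht =>
    (hVN.continuous.continuousAt.comp (hx t ht).continuousAt).continuousWithinAt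
  have hanti_gen : ∀ δ : ℝ, (∀ t, 0 < t → ⟪gradient VN (x t), f (x t)⟫ + δ ≤ 0) →
      AntitoneOn (fun t => V t + δ * t) (Set.Ici 0) := by
    intro δ hδ
    have hD : ∀ t : ℝ, 0 < t →
        HasDerivAt (fun s => V s + δ * s) (⟪gradient VN (x t), f (x t)⟫ + δ) t := by
      intro t ht
      convert (hVderiv t (le_of_lt ht)).add ((hasDerivAt_id t).const_mul δ) using 1
      · rfl
      · rfl
      · rfl
      · ring
    apply antitoneOn_of_deriv_nonpos (convex_Ici 0)
    · exact hVcont.add (continuous_const.mul continuous_id).continuousOn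
    · intro t ht
      rw [interior_Ici] at ht
      exact (hD t ht).differentiableAt.differentiableWithinAt
    · intro t ht
      rw [interior_Ici] at ht
      rw [(hD t ht).deriv]
      exact hδ t ht
  have hVanti : AntitoneOn V (Set.Ici 0) := by
    have := hanti_gen 0 (fun t ht => by simpa using hdle t (le_of_lt ht))
    simpa using this
  have hVnn : ∀ t, 0 ≤ t → 0 ≤ V t := by
    intro t ht
    by_cases h0 : x t = 0
    · simp [hVdef, h0, hVN0]
    · exact le_of_lt (hVNpos _ (hinv t ht) h0)
  set Vm : ℝ → ℝ := fun t => V (max t 0) with hVmdef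
  have hVmeq : ∀ t, 0 ≤ t → Vm t = V t := by
    intro t ht
    simp only [hVmdef, max_eq_left ht]
  have hVmanti : Antitone Vm := fun s t hst =>
    hVanti (le_max_right s 0) (le_max_right t 0) (max_le_max hst le_rfl)
  have hVmbdd : BddBelow (Set.range Vm) := by
    refine ⟨0, ?_⟩
    rintro _ ⟨t, rfl⟩
    exact hVnn _ (le_max_right t 0)
  set c := ⨅ t, Vm t with hcdef
  have hVmtend : Filter.Tendsto Vm Filter.atTop (nhds c) :=
    tendsto_atTop_ciInf hVmanti hVmbdd
  have hcge : ∀ t, 0 ≤ t → c ≤ V t := by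
    intro t ht
    have := ciInf_le hVmbdd t
    rwa [hVmeq t ht] at this
  have hc0 : 0 ≤ c := le_ciInf fun t => hVnn _ (le_max_right t 0)
  have hgradc : Continuous (fun y => gradient VN y) := by
    have : (fun y => gradient VN y)
        = fun y => (InnerProductSpace.toDual ℝ _).symm (fderiv ℝ VN y) := rfl
    rw [this]
    exact (InnerProductSpace.toDual ℝ _).symm.continuous.comp (hVN.continuous_fderiv one_ne_zero)
  have hGcont : Continuous (fun y => ⟪gradient VN y, f y⟫) :=
    hgradc.inner hf.continuous
  have hceq : c = 0 := by
    by_contra hcne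
    have hcpos : 0 < c := lt_of_le_of_ne hc0 (Ne.symm hcne)
    set K : Set (EuclideanSpace ℝ (Fin n)) := {y | R y ≤ γ ∧ c ≤ VN y} with hKdef
    have hKcl : IsClosed K :=
      (isClosed_le hR.continuous continuous_const).inter
        (isClosed_le continuous_const hVN.continuous)
    have hKcomp : IsCompact K :=
      hcomp.of_isClosed_subset hKcl (fun y hy => hy.1)
    have hxK : ∀ t, 0 ≤ t → x t ∈ K := fun t ht => ⟨hinv t ht, hcge t ht⟩
    have hKne : K.Nonempty := ⟨x 0, hxK 0 le_rfl⟩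
    obtain ⟨z, hzK, hzmax⟩ := hKcomp.exists_isMaxOn hKne hGcont.continuousOn
    obtain ⟨hzR, hzV⟩ := hzK
    have hz0 : z ≠ 0 := by
      intro h
      rw [h, hVN0] at hzV
      exact absurd hzV (not_le.2 hcpos)
    have hδpos : ⟪gradient VN z, f z⟫ < 0 := hVNdec _ hzR hz0
    set δ := -⟪gradient VN z, f z⟫ with hδdef
    have hδp : 0 < δ := by simpa [hδdef] using hδpos
    have hdecay : AntitoneOn (fun t => V t + δ * t) (Set.Ici 0) := by
      apply hanti_gen
      intro t ht
      have h5 := hzmax (hxK t (le_of_lt ht))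
      simp only [Set.mem_setOf_eq] at h5
      rw [hδdef]
      linarith
    set T := max 0 ((V 0 - c) / δ + 1) with hTdef
    have hT0 : 0 ≤ T := le_max_left _ _
    have h1 : V T + δ * T ≤ V 0 + δ * 0 := hdecay Set.self_mem_Ici hT0 hT0
    have h2 : c ≤ V T := hcge T hT0
    have h3 : (V 0 - c) / δ + 1 ≤ T := le_max_right _ _
    have h4 : V 0 - c < δ * T := by
      have := (div_le_iff₀ hδp).1 (by linarith : (V 0 - c) / δ ≤ T - 1)
      nlinarith
    linarith
  rw [hceq] at hVmtend
  rw [Metric.tendsto_nhds]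
  intro ε hε
  set Kε : Set (EuclideanSpace ℝ (Fin n)) := {y | R y ≤ γ ∧ ε ≤ dist y 0} with hKε
  by_cases hKne : Kε.Nonempty
  · have hKcl : IsClosed Kε :=
      (isClosed_le hR.continuous continuous_const).inter
        (isClosed_le continuous_const (continuous_id.dist continuous_const))
    have hKcomp : IsCompact Kε := hcomp.of_isClosed_subset hKcl (fun y hy => hy.1)
    obtain ⟨z, hzK, hzmin⟩ := hKcomp.exists_isMinOn hKne hVN.continuous.continuousOn
    obtain ⟨hzR, hzd⟩ := hzK
    have hz0 : z ≠ 0 := by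
      intro h
      rw [h, dist_self] at hzd
      exact absurd hzd (not_le.2 hε)
    have hm : 0 < VN z := hVNpos _ hzR hz0
    have hev : ∀ᶠ t in Filter.atTop, Vm t < VN z :=
      hVmtend.eventually (eventually_lt_nhds hm)
    filter_upwards [hev, Filter.eventually_ge_atTop (0:ℝ)] with t hVt ht
    by_contra hd
    push_neg at hd
    have hmem : x t ∈ Kε := ⟨hinv t ht, hd⟩
    have h6 := hzmin hmem
    simp only [Set.mem_setOf_eq] at h6
    rw [hVmeq t ht] at hVt
    exact absurd (lt_of_le_of_lt h6 hVt) (lt_irrefl _)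
  · rw [Set.not_nonempty_iff_eq_empty] at hKne
    filter_upwards [Filter.eventually_ge_atTop (0:ℝ)] with t ht
    by_contra hd
    push_neg at hd
    have hmem : x t ∈ Kε := ⟨hinv t ht, hd⟩
    rw [hKne] at hmem
    exact hmem
end
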